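/- Let λ ∈ ℝⁿ, U ⊆ Ω open, and let u be a KZ solution on U with spectral parameter λ. Set φ(x) = Σ_{g∈G} ε(g) u_g(x). Then φ satisfies the Calogero–Moser system: for every ξ ∈ ℝⁿ and every integer d ≥ 0, D_{ξ,d} φ = (Σ_{g∈G} ⟨gξ, λ⟩^d) · φ on U. -/

import Mathlib

open Matrix Finset

noncomputable section

abbrev OG (n : ℕ) := ↥(Matrix.orthogonalGroup (Fin n) ℝ)

def mOf {n : ℕ} {G : Subgroup (OG n)} (g : G) : Matrix (Fin n) (Fin n) ℝ :=
  ((g : OG n) : Matrix (Fin n) (Fin n) ℝ)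

/-- `M` is the orthogonal reflection with normal vector `v`. -/
def IsReflWith {n : ℕ} (M : Matrix (Fin n) (Fin n) ℝ) (v : Fin n → ℝ) : Prop :=
  v ≠ 0 ∧ ∀ x : Fin n → ℝ, M.mulVec x = x - (2 * (v ⬝ᵥ x) / (v ⬝ᵥ v)) • v

/-- The complement of the reflection hyperplanes. -/
def OmegaSet {n : ℕ} {G : Subgroup (OG n)} (A : Finset G) (α : G → Fin n → ℝ) :
    Set (Fin n → ℝ) := {x | ∀ s ∈ A, α s ⬝ᵥ x ≠ 0}

/-- A solution of the KZ equations on `U` with spectral parameter `l`: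
a `C^∞` function `u : U → ℂ[G]` satisfying
`∂_ξ u_g = Σ_{s∈A} m_s (⟨α_s,ξ⟩/⟨α_s,x⟩)(u_{sg} + u_g) + ⟨ξ, gl⟩ u_g`. -/
def IsKZSol {n : ℕ} {G : Subgroup (OG n)} [Fintype G] (A : Finset G)
    (α : G → Fin n → ℝ) (m : G → ℕ) (l : Fin n → ℝ) (U : Set (Fin n → ℝ))
    (u : (Fin n → ℝ) → G → ℂ) : Prop :=
  ContDiffOn ℝ (⊤ : ℕ∞) u U ∧
  ∀ (g : G) (ξ : Fin n → ℝ), ∀ x ∈ U,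
    fderiv ℝ (fun y => u y g) x ξ =
      (∑ s ∈ A, (m s : ℂ) * (((α s ⬝ᵥ ξ) / (α s ⬝ᵥ x) : ℝ) : ℂ) * (u x (s * g) + u x g))
      + ((ξ ⬝ᵥ (mOf g).mulVec l : ℝ) : ℂ) * u x g

/-- The operators `D_ξ^{(d)}`. -/
noncomputable def Dop {n : ℕ} {G : Subgroup (OG n)} (A : Finset G)
    (α : G → Fin n → ℝ) (m : G → ℕ) :
    ℕ → (Fin n → ℝ) → ((Fin n → ℝ) → ℂ) → (Fin n → ℝ) → ℂ
  | 0, _, f => f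
  | d + 1, ξ, f => fun x =>
      fderiv ℝ (Dop A α m d ξ f) x ξ
      + ∑ s ∈ A, (m s : ℂ) * (((α s ⬝ᵥ ξ) / (α s ⬝ᵥ x) : ℝ) : ℂ)
          * (Dop A α m d ((mOf s).mulVec ξ) f x - Dop A α m d ξ f x)

/-- The symmetrized operators `D_{ξ,d} = Σ_{g∈G} D_{gξ}^{(d)}`. -/
noncomputable def Dtot {n : ℕ} {G : Subgroup (OG n)} [Fintype G] (A : Finset G)
    (α : G → Fin n → ℝ) (m : G → ℕ) (ξ : Fin n → ℝ) (d : ℕ)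
    (f : (Fin n → ℝ) → ℂ) (x : Fin n → ℝ) : ℂ :=
  ∑ g : G, Dop A α m d ((mOf g).mulVec ξ) f x

/-- A solution of the Calogero–Moser system on `U` with spectral parameter `l`:
a `C^∞` function `φ` with `D_{ξ,d} φ = (Σ_{g∈G} ⟨gξ,l⟩^d) φ`. -/
def IsCMSol {n : ℕ} {G : Subgroup (OG n)} [Fintype G] (A : Finset G)
    (α : G → Fin n → ℝ) (m : G → ℕ) (l : Fin n → ℝ) (U : Set (Fin n → ℝ))
    (φ : (Fin n → ℝ) → ℂ) : Prop :=
  ContDiffOn ℝ (⊤ : ℕ∞) φ U ∧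
  ∀ (ξ : Fin n → ℝ) (d : ℕ), ∀ x ∈ U,
    Dtot A α m ξ d φ x = (∑ g : G, (((mOf g).mulVec ξ ⬝ᵥ l : ℝ) : ℂ) ^ d) * φ x

section auxMC
variable {n : ℕ} {G : Subgroup (OG n)}

lemma mOf_mul (g h : G) : mOf (g * h) = mOf g * mOf h := rfl
lemma mOf_one : mOf (1 : G) = 1 := rfl
lemma mOf_inj : Function.Injective (mOf (n := n) (G := G)) := by
  intro a b h
  exact Subtype.ext (Subtype.ext h)

lemma matrix_ext_of_mulVec {M N : Matrix (Fin n) (Fin n) ℝ}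
    (h : ∀ x, M.mulVec x = N.mulVec x) : M = N := by
  ext i j
  have := congrFun (h (Pi.single j 1)) i
  simpa using this

lemma refl_dot_symm {M : Matrix (Fin n) (Fin n) ℝ} {v : Fin n → ℝ}
    (h : IsReflWith M v) (a b : Fin n → ℝ) :
    M.mulVec a ⬝ᵥ b = a ⬝ᵥ M.mulVec b := by
  rw [h.2, h.2]
  simp only [sub_dotProduct, dotProduct_sub, smul_dotProduct, dotProduct_smul,
    smul_eq_mul]
  rw [dotProduct_comm v b, dotProduct_comm v a]
  ring

lemma refl_invol {M : Matrix (Fin n) (Fin n) ℝ} {v : Fin n → ℝ}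
    (h : IsReflWith M v) (a : Fin n → ℝ) :
    M.mulVec (M.mulVec a) = a := by
  have hv : v ⬝ᵥ v ≠ 0 := by
    simpa [dotProduct_self_eq_zero] using h.1
  rw [h.2, h.2]
  have hva : v ⬝ᵥ (a - (2 * (v ⬝ᵥ a) / (v ⬝ᵥ v)) • v) = -(v ⬝ᵥ a) := by
    rw [dotProduct_sub, dotProduct_smul, smul_eq_mul]
    field_simp
    ring
  rw [hva]
  ext i
  simp only [Pi.sub_apply, Pi.smul_apply, smul_eq_mul]
  field_simp
  ring

lemma refl_det {M : Matrix (Fin n) (Fin n) ℝ} {v : Fin n → ℝ}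
    (h : IsReflWith M v) : M.det = -1 := by
  have hv : v ⬝ᵥ v ≠ 0 := by
    simpa [dotProduct_self_eq_zero] using h.1
  have hM : M = 1 + replicateCol Unit ((-2 / (v ⬝ᵥ v)) • v) * replicateRow Unit v := by
    apply matrix_ext_of_mulVec
    intro x
    rw [h.2]
    rw [Matrix.add_mulVec, Matrix.one_mulVec, ← Matrix.mulVec_mulVec,
      Matrix.replicateRow_mulVec_eq_const]
    ext i
    simp only [Pi.sub_apply, Pi.add_apply, Pi.smul_apply, smul_eq_mul,
      Matrix.mulVec, dotProduct, replicateCol, Matrix.of_apply, Function.const_apply,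
      Pi.smul_apply, Finset.univ_unique, Finset.sum_singleton]
    field_simp
    ring
  rw [hM, det_one_add_replicateCol_mul_replicateRow]
  rw [dotProduct_smul, smul_eq_mul]
  field_simp
  ring

lemma refl_sq_one {s : G} {v : Fin n → ℝ} (hs : IsReflWith (mOf s) v) : s * s = 1 := by
  apply mOf_inj
  rw [mOf_mul, mOf_one]
  apply matrix_ext_of_mulVec
  intro x
  rw [← Matrix.mulVec_mulVec, refl_invol hs, Matrix.one_mulVec]

lemma orth_dot (g : G) (a b : Fin n → ℝ) :
    (mOf g).mulVec a ⬝ᵥ (mOf g).mulVec b = a ⬝ᵥ b := by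
  have hg : (mOf g)ᵀ * mOf g = 1 := by
    have := (g : OG n).prop
    rw [Matrix.mem_orthogonalGroup_iff'] at this
    simpa [star, mOf] using this
  have h2 : (mOf g *ᵥ a) ᵥ* mOf g = ((mOf g)ᵀ * mOf g) *ᵥ a := by
    rw [← Matrix.mulVec_transpose, Matrix.mulVec_mulVec]
  rw [dotProduct_mulVec, h2, hg, Matrix.one_mulVec]

variable [Fintype G]

lemma keyMC (A : Finset G) (α : G → Fin n → ℝ) (m : G → ℕ) (l : Fin n → ℝ)
    (U : Set (Fin n → ℝ))
    (hrefl : ∀ s ∈ A, IsReflWith (mOf s) (α s))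
    (hUopen : IsOpen U)
    (u : (Fin n → ℝ) → G → ℂ) (hu : IsKZSol A α m l U u) :
    ∀ (d : ℕ) (ξ : Fin n → ℝ), ∀ x ∈ U,
      Dop A α m d ξ (fun y => ∑ g : G, ((mOf g).det : ℂ) * u y g) x
        = ∑ g : G, ((mOf g).det : ℂ) * (((ξ ⬝ᵥ (mOf g).mulVec l : ℝ)) : ℂ) ^ d * u x g := by
  intro d
  induction d with
  | zero => intro ξ x hx; simp [Dop]
  | succ d IH =>
    intro ξ x hx
    have hdiffu : ∀ g : G, DifferentiableAt ℝ (fun y => u y g) x := by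
      intro g
      have h1 : DifferentiableAt ℝ u x :=
        (hu.1.differentiableOn (by simp)).differentiableAt (hUopen.mem_nhds hx)
      exact differentiableAt_pi.mp h1 g
    have hEvent : Dop A α m d ξ (fun y => ∑ g : G, ((mOf g).det : ℂ) * u y g)
        =ᶠ[nhds x]
        fun y => ∑ g : G, ((mOf g).det : ℂ) * (((ξ ⬝ᵥ (mOf g).mulVec l : ℝ)) : ℂ) ^ d * u y g := by
      filter_upwards [hUopen.mem_nhds hx] with y hy using IH ξ y hy
    have hfd := hEvent.fderiv_eq (𝕜 := ℝ)
    have hH : HasFDerivAt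
        (fun y => ∑ g : G, ((mOf g).det : ℂ) * (((ξ ⬝ᵥ (mOf g).mulVec l : ℝ)) : ℂ) ^ d * u y g)
        (∑ g : G, (((mOf g).det : ℂ) * (((ξ ⬝ᵥ (mOf g).mulVec l : ℝ)) : ℂ) ^ d) •
          fderiv ℝ (fun y => u y g) x) x :=
      HasFDerivAt.fun_sum fun g _ => ((hdiffu g).hasFDerivAt.const_mul _)
    have step1 : fderiv ℝ (Dop A α m d ξ (fun y => ∑ g : G, ((mOf g).det : ℂ) * u y g)) x ξ
        = ∑ g : G, (((mOf g).det : ℂ) * (((ξ ⬝ᵥ (mOf g).mulVec l : ℝ)) : ℂ) ^ d) *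
            ((∑ s ∈ A, (m s : ℂ) * (((α s ⬝ᵥ ξ) / (α s ⬝ᵥ x) : ℝ) : ℂ) * (u x (s * g) + u x g))
              + ((ξ ⬝ᵥ (mOf g).mulVec l : ℝ) : ℂ) * u x g) := by
      rw [hfd, hH.fderiv]
      rw [ContinuousLinearMap.sum_apply]
      exact Finset.sum_congr rfl fun g _ => by
        rw [ContinuousLinearMap.smul_apply, smul_eq_mul, hu.2 g ξ x hx]
    have hflip : ∀ s ∈ A,
        Dop A α m d ((mOf s).mulVec ξ) (fun y => ∑ g : G, ((mOf g).det : ℂ) * u y g) x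
        = - ∑ g : G, ((mOf g).det : ℂ) * (((ξ ⬝ᵥ (mOf g).mulVec l : ℝ)) : ℂ) ^ d * u x (s * g) := by
      intro s hs
      rw [IH ((mOf s).mulVec ξ) x hx]
      have hss : s * s = 1 := refl_sq_one (hrefl s hs)
      have hdet : ∀ g : G, ((mOf (s * g)).det : ℂ) = -((mOf g).det : ℂ) := by
        intro g
        rw [mOf_mul, Matrix.det_mul, refl_det (hrefl s hs)]
        push_cast
        ring
      have h1 : ∀ g : G, ((mOf s).mulVec ξ ⬝ᵥ (mOf g).mulVec l : ℝ)
          = (ξ ⬝ᵥ (mOf (s * g)).mulVec l : ℝ) := by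
        intro g
        rw [refl_dot_symm (hrefl s hs), Matrix.mulVec_mulVec, ← mOf_mul]
      have h2 : ∑ g : G, ((mOf g).det : ℂ) * (((ξ ⬝ᵥ (mOf (s * g)).mulVec l : ℝ)) : ℂ) ^ d * u x g
          = ∑ g : G, -(((mOf g).det : ℂ) * (((ξ ⬝ᵥ (mOf g).mulVec l : ℝ)) : ℂ) ^ d * u x (s * g)) := by
        refine (Fintype.sum_bijective (fun g => s * g) (Group.mulLeft_bijective s)
          (fun g => -(((mOf g).det : ℂ) * (((ξ ⬝ᵥ (mOf g).mulVec l : ℝ)) : ℂ) ^ d * u x (s * g)))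
          (fun g => ((mOf g).det : ℂ) * (((ξ ⬝ᵥ (mOf (s * g)).mulVec l : ℝ)) : ℂ) ^ d * u x g)
          (fun g => ?_)).symm
        have e1 : s * (s * g) = g := by rw [← mul_assoc, hss, one_mul]
        show -(((mOf g).det : ℂ) * (((ξ ⬝ᵥ (mOf g).mulVec l : ℝ)) : ℂ) ^ d * u x (s * g))
          = ((mOf (s * g)).det : ℂ) * (((ξ ⬝ᵥ (mOf (s * (s * g))).mulVec l : ℝ)) : ℂ) ^ d * u x (s * g)
        rw [e1, hdet g]
        ring
      calc ∑ g : G, ((mOf g).det : ℂ) * (((mOf s).mulVec ξ ⬝ᵥ (mOf g).mulVec l : ℝ) : ℂ) ^ d * u x g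
          = ∑ g : G, ((mOf g).det : ℂ) * (((ξ ⬝ᵥ (mOf (s * g)).mulVec l : ℝ)) : ℂ) ^ d * u x g :=
            Finset.sum_congr rfl fun g _ => by rw [h1 g]
        _ = ∑ g : G, -(((mOf g).det : ℂ) * (((ξ ⬝ᵥ (mOf g).mulVec l : ℝ)) : ℂ) ^ d * u x (s * g)) := h2
        _ = - ∑ g : G, ((mOf g).det : ℂ) * (((ξ ⬝ᵥ (mOf g).mulVec l : ℝ)) : ℂ) ^ d * u x (s * g) := by
            rw [Finset.sum_neg_distrib]
    simp only [Dop]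
    rw [step1]
    have hsecond : ∑ s ∈ A, (m s : ℂ) * (((α s ⬝ᵥ ξ) / (α s ⬝ᵥ x) : ℝ) : ℂ) *
        (Dop A α m d ((mOf s).mulVec ξ) (fun y => ∑ g : G, ((mOf g).det : ℂ) * u y g) x
          - Dop A α m d ξ (fun y => ∑ g : G, ((mOf g).det : ℂ) * u y g) x)
        = - ∑ s ∈ A, ∑ g : G, ((m s : ℂ) * (((α s ⬝ᵥ ξ) / (α s ⬝ᵥ x) : ℝ) : ℂ)) *
            (((mOf g).det : ℂ) * (((ξ ⬝ᵥ (mOf g).mulVec l : ℝ)) : ℂ) ^ d * (u x (s * g) + u x g)) := by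
      have gen : ∀ (c : ℂ) (T1 T2 : G → ℂ),
          c * ((-∑ g : G, T1 g) - ∑ g : G, T2 g) = -∑ g : G, c * (T1 g + T2 g) := by
        intro c T1 T2
        rw [← Finset.mul_sum, Finset.sum_add_distrib]
        ring
      rw [← Finset.sum_neg_distrib]
      refine Finset.sum_congr rfl fun s hs => ?_
      rw [hflip s hs, IH ξ x hx]
      refine (gen _ _ _).trans ?_
      exact neg_inj.mpr (Finset.sum_congr rfl fun g _ => by ring)
    rw [hsecond]
    have hfirst : ∑ g : G, (((mOf g).det : ℂ) * (((ξ ⬝ᵥ (mOf g).mulVec l : ℝ)) : ℂ) ^ d) *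
            ((∑ s ∈ A, (m s : ℂ) * (((α s ⬝ᵥ ξ) / (α s ⬝ᵥ x) : ℝ) : ℂ) * (u x (s * g) + u x g))
              + ((ξ ⬝ᵥ (mOf g).mulVec l : ℝ) : ℂ) * u x g)
        = (∑ s ∈ A, ∑ g : G, ((m s : ℂ) * (((α s ⬝ᵥ ξ) / (α s ⬝ᵥ x) : ℝ) : ℂ)) *
            (((mOf g).det : ℂ) * (((ξ ⬝ᵥ (mOf g).mulVec l : ℝ)) : ℂ) ^ d * (u x (s * g) + u x g)))
          + ∑ g : G, ((mOf g).det : ℂ) * (((ξ ⬝ᵥ (mOf g).mulVec l : ℝ)) : ℂ) ^ (d + 1) * u x g := by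
      rw [Finset.sum_comm (s := A) (t := Finset.univ), ← Finset.sum_add_distrib]
      refine Finset.sum_congr rfl fun g _ => ?_
      rw [mul_add, Finset.mul_sum]
      congr 1
      · exact Finset.sum_congr rfl fun s _ => by ring
      · rw [pow_succ]; ring
    rw [hfirst]
    ring
end auxMC

/-- For a KZ solution `u`, the function `φ = Σ_{g∈G} ε(g) u_g` satisfies the
Calogero–Moser system `D_{ξ,d} φ = (Σ_{g∈G} ⟨gξ,λ⟩^d) φ` on `U`. -/
theorem matsuo_cherednik_image_solves_CM
    (n : ℕ) (hn : 1 ≤ n) (G : Subgroup (OG n)) [Fintype G]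
    (A : Finset G) (α : G → Fin n → ℝ)
    (hA : ∀ s : G, s ∈ A ↔ ∃ v : Fin n → ℝ, IsReflWith (mOf s) v)
    (hrefl : ∀ s ∈ A, IsReflWith (mOf s) (α s))
    (hgen : Subgroup.closure (A : Set G) = ⊤)
    (m : G → ℕ) (hm : ∀ (g : G), ∀ s ∈ A, m (g * s * g⁻¹) = m s)
    (l : Fin n → ℝ) (U : Set (Fin n → ℝ)) (hUopen : IsOpen U) (hUΩ : U ⊆ OmegaSet A α)
    (u : (Fin n → ℝ) → G → ℂ) (hu : IsKZSol A α m l U u)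
    (ξ : Fin n → ℝ) (d : ℕ) :
    ∀ x ∈ U, Dtot A α m ξ d (fun y => ∑ g : G, (mOf g).det * u y g) x
      = (∑ g : G, (((mOf g).mulVec ξ ⬝ᵥ l : ℝ) : ℂ) ^ d)
          * ∑ g : G, (mOf g).det * u x g := by
  intro x hx
  have hkey := keyMC A α m l U hrefl hUopen u hu d
  show ∑ h : G, Dop A α m d ((mOf h).mulVec ξ) (fun y => ∑ g : G, ((mOf g).det : ℂ) * u y g) x = _
  calc ∑ h : G, Dop A α m d ((mOf h).mulVec ξ) (fun y => ∑ g : G, ((mOf g).det : ℂ) * u y g) x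
      = ∑ h : G, ∑ g : G, ((mOf g).det : ℂ) *
          ((((mOf h).mulVec ξ ⬝ᵥ (mOf g).mulVec l : ℝ)) : ℂ) ^ d * u x g :=
        Finset.sum_congr rfl fun h _ => hkey _ x hx
    _ = ∑ g : G, ∑ h : G, ((mOf g).det : ℂ) *
          ((((mOf h).mulVec ξ ⬝ᵥ (mOf g).mulVec l : ℝ)) : ℂ) ^ d * u x g := Finset.sum_comm
    _ = ∑ g : G, (∑ h : G, ((((mOf h).mulVec ξ ⬝ᵥ l : ℝ)) : ℂ) ^ d) * (((mOf g).det : ℂ) * u x g) := by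
        refine Finset.sum_congr rfl fun g _ => ?_
        have hre : ∑ h : G, ((((mOf h).mulVec ξ ⬝ᵥ l : ℝ)) : ℂ) ^ d
            = ∑ h : G, ((((mOf h).mulVec ξ ⬝ᵥ (mOf g).mulVec l : ℝ)) : ℂ) ^ d := by
          refine Fintype.sum_bijective (fun h => g * h) (Group.mulLeft_bijective g)
            _ _ fun h => ?_
          have : ((mOf h).mulVec ξ ⬝ᵥ l : ℝ) = ((mOf (g * h)).mulVec ξ ⬝ᵥ (mOf g).mulVec l : ℝ) := by
            rw [mOf_mul, ← Matrix.mulVec_mulVec, orth_dot]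
          rw [this]
        rw [hre, Finset.sum_mul]
        exact Finset.sum_congr rfl fun h _ => by ring
    _ = (∑ h : G, ((((mOf h).mulVec ξ ⬝ᵥ l : ℝ)) : ℂ) ^ d) * ∑ g : G, ((mOf g).det : ℂ) * u x g := by
        rw [Finset.mul_sum]
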